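/- For odd positive integers n and k and any r with 1 ≤ r, the graph k·Cₙʳ (disjoint union of k copies of the r-th power of the n-cycle) is edge graceful, assuming Cₙʳ is striaeform edge graceful. -/

import Mathlib

/-- A finite multigraph (no loops): each edge has an unordered pair of distinct ends. -/
structure Multigraph (V E : Type) [Fintype V] [DecidableEq V] [Fintype E] where
  ends : E → Sym2 V
  loopless : ∀ e, ¬ (ends e).IsDiag

variable {V E : Type} [Fintype V] [DecidableEq V] [Fintype E]

/-- The edges incident with a vertex. -/
def Multigraph.incident (G : Multigraph V E) (v : V) : Finset E :=
  Finset.univ.filter (fun e => v ∈ G.ends e)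

/-- The degree of a vertex (no loops, so each incident edge counts once). -/
def Multigraph.degree (G : Multigraph V E) (v : V) : ℕ := (G.incident v).card

/-- Edge gracefulness: the edges can be labeled bijectively by `1, …, q` so that the
vertex labels induced by summing labels of incident edges modulo `p` are distinct. -/
def Multigraph.EdgeGraceful (G : Multigraph V E) : Prop :=
  ∃ ℓ : E ≃ Fin (Fintype.card E),
    Function.Injective (fun v : V =>
      ∑ e ∈ G.incident v, (((ℓ e).val + 1 : ℕ) : ZMod (Fintype.card V)))

/-- The disjoint union of `k` copies of `G`. -/
def Multigraph.copies (G : Multigraph V E) (k : ℕ) : Multigraph (V × Fin k) (E × Fin k) where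
  ends e := (G.ends e.1).map (fun v => (v, e.2))
  loopless e h := G.loopless e.1 (by
    have : Function.Injective (fun v : V => (v, e.2)) := fun a b hab => congrArg Prod.fst hab
    rwa [Sym2.isDiag_map this] at h)

variable [DecidableEq E]

/-- `G` is striaeform: it has a 2-factorization `S₁, …, S_r` (every vertex is incident
with exactly 2 edges of each factor) and an edge graceful labeling such that the labels
of the `p` edges of each `Sⱼ`, reduced modulo `p`, are exactly `{1, 2, …, p}`
(i.e. all residues modulo `p`). -/
def Multigraph.Striaeform [Nonempty V] (G : Multigraph V E) (r : ℕ) : Prop :=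
  haveI : NeZero (Fintype.card V) := ⟨Fintype.card_ne_zero⟩
  ∃ (f : E → Fin r) (ℓ : E ≃ Fin (Fintype.card E)),
    (∀ (v : V) (j : Fin r),
        (Finset.univ.filter (fun e => f e = j ∧ v ∈ G.ends e)).card = 2) ∧
    Function.Injective (fun v : V =>
      ∑ e ∈ G.incident v, (((ℓ e).val + 1 : ℕ) : ZMod (Fintype.card V))) ∧
    (∀ j : Fin r,
      Finset.image (fun e => (((ℓ e).val + 1 : ℕ) : ZMod (Fintype.card V)))
        (Finset.univ.filter (fun e => f e = j)) = Finset.univ)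


/-- The `r`-th power `Cₙʳ` of the `n`-cycle, as a multigraph on `ZMod n`: for each
vertex `v` and each `d` with `1 ≤ d ≤ r` there is an edge `{v, v + d}` (each edge of
`Cₙʳ` arises exactly once this way when `2r < n`). -/
def cyclePower (n r : ℕ) [NeZero n] (h : 2 * r < n) :
    Multigraph (ZMod n) (ZMod n × Fin r) where
  ends e := s(e.1, e.1 + ((e.2.val + 1 : ℕ) : ZMod n))
  loopless e hd := by
    have h1 : e.2.val + 1 < n := by omega
    have : ((e.2.val + 1 : ℕ) : ZMod n) ≠ 0 := by
      intro h0
      have := (ZMod.natCast_eq_zero_iff _ n).mp h0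
      have := Nat.le_of_dvd (Nat.succ_pos _) this
      omega
    simp only [Sym2.isDiag_iff_proj_eq] at hd
    exact this (left_eq_add.mp hd)

/-!
Label edge `e` of copy `t` by the number whose base-`(p, k, r)` digits are `ℓ e mod p`,
`cₛ t mod k` and `s`, where `s = f e` is the 2-factor of `e`, `ℓ` the striated labelling of `G`
and `c₀, …, c_{r-1}` are units of `ZMod k` summing to `1`. Since each factor hits every residue
mod `p` exactly once and `t ↦ cₛ t` permutes `ZMod k`, this is a bijection onto `0, …, rkp - 1`.
Modulo `pk`, the label sum at `(v, t)` is `A v + 2pt`, where `A v ≡ ∑ (ℓ e + 1) (mod p)` is the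
vertex sum of `v` in `G`: every vertex meets two edges of each factor, so the middle digits
contribute `2 ∑ₛ cₛ t = 2t`. Reducing mod `p` recovers `v`, and then `2pt mod pk` recovers `t`
because `k` is odd.
-/

theorem exists_units_sum_eq_one {R : Type*} [CommRing R] (h2 : IsUnit (2 : R)) {r : ℕ}
    (hr : r ≠ 0) : ∃ c : Fin r → Rˣ, ∑ j, (c j : R) = 1 := by
  obtain ⟨m, rfl⟩ := Nat.exists_eq_succ_of_ne_zero hr
  -- `c₀ + (-1 + 1 - 1 + ⋯)` with `m` alternating terms, and `c₀ ∈ {1, 2}` fixes the total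
  refine ⟨Fin.cons (if Even m then 1 else h2.unit) fun i => (-1) ^ (i.val + 1), ?_⟩
  rw [Fin.sum_univ_succ]
  simp only [Fin.cons_zero, Fin.cons_succ, Units.val_pow_eq_pow_val, Units.val_neg,
    Units.val_one, pow_succ, mul_neg_one, Finset.sum_neg_distrib]
  rw [Fin.sum_univ_eq_sum_range (fun i => (-1 : R) ^ i), neg_one_geom_sum]
  split_ifs
  · simp
  · rw [h2.unit_spec]
    norm_num

theorem Nat.eq_of_mul_two_mul_modEq {p k t s : ℕ} (hp : p ≠ 0) (hk : Odd k) (ht : t < k)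
    (hs : s < k) (h : p * (2 * t) ≡ p * (2 * s) [MOD p * k]) : t = s := by
  have h2 : 2 * t ≡ 2 * s [MOD k] := Nat.ModEq.mul_left_cancel' hp h
  exact (Nat.ModEq.cancel_left_of_coprime (Nat.coprime_two_right.mpr hk) h2).eq_of_lt_of_lt ht hs

theorem ZMod.exists_mod_eq_of_image_eq_univ {ι : Type*} {p : ℕ} [NeZero p] {s : Finset ι}
    {g : ι → ℕ} (hg : s.image (fun i => ((g i + 1 : ℕ) : ZMod p)) = Finset.univ) :
    ∀ x < p, ∃ i ∈ s, g i % p = x := by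
  intro x hx
  obtain ⟨i, hi, hix⟩ := Finset.mem_image.1 (hg ▸ Finset.mem_univ ((x + 1 : ℕ) : ZMod p))
  rw [ZMod.natCast_eq_natCast_iff] at hix
  exact ⟨i, hi, by rw [Nat.ModEq.add_right_cancel' 1 hix, Nat.mod_eq_of_lt hx]⟩

namespace Multigraph

omit [DecidableEq E]

theorem incident_copies (G : Multigraph V E) (k : ℕ) (v : V) (t : Fin k) :
    (G.copies k).incident (v, t) = (G.incident v).map (.sectL E t) := by
  ext ⟨e, s⟩
  simp only [incident, copies, Finset.mem_filter, Finset.mem_univ, true_and, Finset.mem_map,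
    Function.Embedding.sectL_apply, Sym2.mem_map, Prod.mk.injEq]
  constructor
  · rintro ⟨w, hw, rfl, rfl⟩
    exact ⟨e, hw, rfl, rfl⟩
  · rintro ⟨e', hw, rfl, rfl⟩
    exact ⟨v, hw, rfl, rfl⟩

theorem card_filter_mem_ends (G : Multigraph V E) (e : E) :
    (Finset.univ.filter (· ∈ G.ends e)).card = 2 := by
  rw [← Sym2.card_toFinset_of_not_isDiag _ (G.loopless e)]
  congr 1
  ext v
  simp [Sym2.mem_toFinset]

def IsTwoFactorization {r : ℕ} (G : Multigraph V E) (f : E → Fin r) : Prop :=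
  ∀ (v : V) (j : Fin r), (Finset.univ.filter (fun e => f e = j ∧ v ∈ G.ends e)).card = 2

namespace IsTwoFactorization

variable {r : ℕ} {G : Multigraph V E} {f : E → Fin r}

theorem card_filter_eq (h : G.IsTwoFactorization f) (j : Fin r) :
    (Finset.univ.filter (fun e => f e = j)).card = Fintype.card V := by
  have hdouble : ∑ v : V, (Finset.univ.filter (fun e => f e = j ∧ v ∈ G.ends e)).card
      = ∑ e ∈ Finset.univ.filter (fun e => f e = j),
          (Finset.univ.filter (· ∈ G.ends e)).card := by
    simp only [Finset.card_filter, Finset.sum_filter]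
    rw [Finset.sum_comm]
    refine Finset.sum_congr rfl fun e _ => ?_
    split_ifs with he <;> simp [he]
  simp only [h _ j, card_filter_mem_ends, Finset.sum_const, smul_eq_mul, Finset.card_univ]
    at hdouble
  omega

theorem card_eq (h : G.IsTwoFactorization f) : Fintype.card E = r * Fintype.card V := by
  rw [← Finset.card_univ, Finset.card_eq_sum_card_fiberwise (f := f) (t := Finset.univ)
    (fun _ _ => Finset.mem_univ _)]
  simp [h.card_filter_eq]

theorem sum_incident {M : Type*} [AddCommMonoid M] (h : G.IsTwoFactorization f) (v : V)
    (F : Fin r → M) : ∑ e ∈ G.incident v, F (f e) = 2 • ∑ j, F j := by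
  rw [← Finset.sum_fiberwise' (G.incident v) f F, Finset.smul_sum]
  refine Finset.sum_congr rfl fun j _ => ?_
  rw [Finset.sum_const, ← h v j, incident, Finset.filter_filter]
  simp_rw [and_comm]

theorem exists_digitLabelling [NeZero (Fintype.card V)] (h : G.IsTwoFactorization f)
    {ℓ : E → ℕ} (hℓ : ∀ j, ∀ x < Fintype.card V, ∃ e, f e = j ∧ ℓ e % Fintype.card V = x)
    {k : ℕ} [NeZero k] (c : Fin r → (ZMod k)ˣ) :
    ∃ L : E × Fin k ≃ Fin (Fintype.card (E × Fin k)), ∀ e t,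
      (L (e, t) : ℕ) = ℓ e % Fintype.card V + Fintype.card V * ((c (f e) : ZMod k) * (t : ℕ)).val
        + Fintype.card V * k * f e := by
  set p := Fintype.card V
  let φ : E × Fin k → Fin (r * (k * p)) := fun x =>
    finProdFinEquiv (f x.1, finProdFinEquiv (⟨((c (f x.1) : ZMod k) * (x.2 : ℕ)).val,
      ZMod.val_lt _⟩, ⟨ℓ x.1 % p, Nat.mod_lt _ (NeZero.pos p)⟩))
  have hcard : Fintype.card (E × Fin k) = r * (k * p) := by
    rw [Fintype.card_prod, h.card_eq, Fintype.card_fin]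
    ring
  have hsurj : Function.Surjective φ := by
    intro m
    obtain ⟨⟨j, z⟩, rfl⟩ := finProdFinEquiv.surjective m
    obtain ⟨⟨y, x⟩, rfl⟩ := finProdFinEquiv.surjective z
    obtain ⟨e, rfl, he⟩ := hℓ j x x.isLt
    refine ⟨(e, ⟨(((c (f e))⁻¹ : (ZMod k)ˣ) * (y : ℕ) : ZMod k).val, ZMod.val_lt _⟩), ?_⟩
    simp [φ, he, ZMod.val_cast_of_lt y.isLt]
  refine ⟨(Equiv.ofBijective φ ((Fintype.bijective_iff_surjective_and_card φ).2
    ⟨hsurj, by simp [hcard]⟩)).trans (finCongr hcard.symm), fun e t => ?_⟩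
  simp only [φ, Equiv.trans_apply, Equiv.ofBijective_apply, finCongr_apply, Fin.val_cast,
    finProdFinEquiv_apply_val]
  ring

theorem sum_digitLabelling_modEq (h : G.IsTwoFactorization f) {k : ℕ} [NeZero k]
    {c : Fin r → ZMod k} (hc : ∑ j, c j = 1) (ℓ : E → ℕ) (p : ℕ) (v : V) (t : Fin k) :
    ∑ e ∈ G.incident v, (ℓ e % p + p * (c (f e) * (t : ℕ)).val + p * k * f e + 1)
      ≡ ∑ e ∈ G.incident v, (ℓ e % p + 1) + p * (2 * t) [MOD p * k] := by
  have hrow : ∑ j, (c j * (t : ℕ)).val ≡ t [MOD k] := by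
    rw [← ZMod.natCast_eq_natCast_iff]
    push_cast [ZMod.natCast_val, ZMod.cast_id]
    rw [← Finset.sum_mul, hc, one_mul]
  have hcopy := h.sum_incident v fun j => (c j * (t : ℕ)).val
  have hfactor := h.sum_incident v fun j => (j : ℕ)
  simp only [smul_eq_mul] at hcopy hfactor
  have hsplit : ∑ e ∈ G.incident v, (ℓ e % p + p * (c (f e) * (t : ℕ)).val + p * k * f e + 1)
      = ∑ e ∈ G.incident v, (ℓ e % p + 1) + p * (2 * ∑ j, (c j * (t : ℕ)).val)
        + p * k * (2 * ∑ j : Fin r, (j : ℕ)) := by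
    simp only [Finset.sum_add_distrib, ← Finset.mul_sum, hcopy, hfactor]
    ring
  rw [hsplit]
  calc _ ≡ ∑ e ∈ G.incident v, (ℓ e % p + 1) + p * (2 * ∑ j, (c j * (t : ℕ)).val) [MOD p * k] := by
        simp [Nat.ModEq, Nat.add_mul_mod_self_left]
    _ ≡ _ [MOD p * k] := (Nat.ModEq.mul_left' p (hrow.mul_left 2)).add_left _

theorem exists_copies_labelling (h : G.IsTwoFactorization f) (hr : r ≠ 0)
    [NeZero (Fintype.card V)] {ℓ : E → ℕ}
    (hℓ : ∀ j, ∀ x < Fintype.card V, ∃ e, f e = j ∧ ℓ e % Fintype.card V = x)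
    {k : ℕ} (hk : Odd k) :
    ∃ L : E × Fin k ≃ Fin (Fintype.card (E × Fin k)), ∀ v t,
      ∑ x ∈ (G.copies k).incident (v, t), ((L x : ℕ) + 1)
        ≡ ∑ e ∈ G.incident v, (ℓ e % Fintype.card V + 1) + Fintype.card V * (2 * t)
          [MOD Fintype.card V * k] := by
  have : NeZero k := ⟨hk.pos.ne'⟩
  have htwo : IsUnit (2 : ZMod k) := by
    simpa using (ZMod.isUnit_iff_coprime 2 k).2 (Nat.coprime_two_left.2 hk)
  obtain ⟨c, hc⟩ := exists_units_sum_eq_one htwo hr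
  obtain ⟨L, hL⟩ := h.exists_digitLabelling hℓ c
  refine ⟨L, fun v t => ?_⟩
  simpa [incident_copies, hL] using
    h.sum_digitLabelling_modEq (c := fun j => c j) hc ℓ (Fintype.card V) v t

end IsTwoFactorization

theorem Striaeform.edgeGraceful_copies [Nonempty V] {G : Multigraph V E} {r k : ℕ}
    (hr : r ≠ 0) (hk : Odd k) (hG : G.Striaeform r) : (G.copies k).EdgeGraceful := by
  obtain ⟨f, ℓ, h2, hinj, hres⟩ := hG
  replace h2 : G.IsTwoFactorization f := h2
  set p := Fintype.card V
  have : NeZero p := ⟨Fintype.card_ne_zero⟩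
  have hℓ (j : Fin r) (x : ℕ) (hx : x < p) : ∃ e, f e = j ∧ (ℓ e : ℕ) % p = x := by
    obtain ⟨e, he, hex⟩ := ZMod.exists_mod_eq_of_image_eq_univ (hres j) x hx
    exact ⟨e, (Finset.mem_filter.1 he).2, hex⟩
  obtain ⟨L, hsum⟩ := h2.exists_copies_labelling hr hℓ hk
  set A : V → ℕ := fun v => ∑ e ∈ G.incident v, ((ℓ e : ℕ) % p + 1)
  have hA (v : V) : (A v : ZMod p) = ∑ e ∈ G.incident v, (((ℓ e : ℕ) + 1 : ℕ) : ZMod p) := by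
    push_cast [A, ZMod.natCast_mod]
    rfl
  refine ⟨L, ?_⟩
  rintro ⟨v, t⟩ ⟨w, s⟩ hvt
  simp only [← Nat.cast_sum, ZMod.natCast_eq_natCast_iff, Fintype.card_prod,
    Fintype.card_fin] at hvt
  have hmod : A v + p * (2 * t) ≡ A w + p * (2 * s) [MOD p * k] :=
    (hsum v t).symm.trans (hvt.trans (hsum w s))
  obtain rfl : v = w := by
    refine hinj ?_
    simp only [← hA, ZMod.natCast_eq_natCast_iff]
    simpa [Nat.ModEq, Nat.add_mul_mod_self_left] using hmod.of_mul_right k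
  obtain rfl : t = s :=
    Fin.ext (Nat.eq_of_mul_two_mul_modEq (NeZero.ne p) hk t.isLt s.isLt
      (Nat.ModEq.add_left_cancel' _ hmod))
  rfl

end Multigraph

theorem stmt_13_general (n k r : ℕ) (hn : 0 < n) (hr : 1 ≤ r)
    (hrn : 2 * r < n) (hkodd : Odd k)
    (hne : NeZero n := ⟨hn.ne'⟩)
    (hstr : (cyclePower n r hrn).Striaeform r) :
    ((cyclePower n r hrn).copies k).EdgeGraceful :=
  hstr.edgeGraceful_copies (by omega) hkodd

/-- Corollary 6 (first half): for odd `n`, `k` and `1 ≤ r` (with `2r < n`, so that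
`Cₙʳ` is `2r`-regular), if `Cₙʳ` is striaeform then `kCₙʳ` is edge graceful. -/
theorem stmt_13 (n k r : ℕ) (hn : 0 < n) (hk : 0 < k) (hr : 1 ≤ r)
    (hrn : 2 * r < n) (hnodd : Odd n) (hkodd : Odd k)
    (hne : NeZero n := ⟨hn.ne'⟩)
    (hstr : (cyclePower n r hrn).Striaeform r) :
    ((cyclePower n r hrn).copies k).EdgeGraceful :=
  stmt_13_general n k r hn hr hrn hkodd hne hstr
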